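/- arXiv:2310.13797 — 3 statements merged into one kernel-verified Lean document; each statement's English description precedes it below -/
import Mathlib

section
/- Suppose μ_0, μ_1 are probability measures on ℝ with positive densities, α_0 is a probability measure on ℝ, F_1 : ℝ → ℝ is increasing, and the relations μ_0 = (R_1 * F_1)_# α_0 and μ_1 = (F_1)_# (α_0 * R_1) hold, where R_1 * F_1 denotes convolution of the function F_1 with the standard Gaussian density. Then the CDF of α_0 satisfies the fixed-point equation G_{α_0} = G_{μ_0} ∘ (R_1 * (G_{μ_1}^{-1} ∘ (R_1 * G_{α_0}))). -/
/-!
The CDF of `α₀ ∗ R₁` is `R₁ ∗ G_{α₀}`, and `F₁` is strictly increasing and pushes `α₀ ∗ R₁`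
forward to `μ₁`, whose CDF is strictly increasing because its density is positive. Hence
`F₁ = G_{μ₁}⁻¹ ∘ (R₁ ∗ G_{α₀})`, so the right-hand side of the fixed-point equation is
`G_{μ₀} ∘ (R₁ ∗ F₁)`. Since `R₁ ∗ F₁` is again strictly increasing and pushes `α₀` forward to `μ₀`,
this is `G_{α₀}`.
-/

open MeasureTheory ProbabilityTheory

/-- Convolution of a function with the standard Gaussian density. -/
noncomputable def gaussConv (f : ℝ → ℝ) (x : ℝ) : ℝ :=
  ∫ z : ℝ, f (x - z) * gaussianPDFReal 0 1 z

/-- The quantile function of a measure. -/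
noncomputable def quantileFun (μ : Measure ℝ) (u : ℝ) : ℝ :=
  sInf {y : ℝ | u ≤ cdf μ y}

open Set

lemma integral_pos_of_forall_pos {X : Type*} [MeasurableSpace X] {μ : Measure X} [NeZero μ]
    {f : X → ℝ} (hf : ∀ x, 0 < f x) (hfi : Integrable f μ) : 0 < ∫ x, f x ∂μ := by
  rw [integral_pos_iff_support_of_nonneg (fun x => (hf x).le) hfi,
    Function.support_eq_univ (fun x => (hf x).ne')]
  exact Measure.measure_univ_pos.mpr (NeZero.ne μ)

lemma isOpenPosMeasure_withDensity {X : Type*} [TopologicalSpace X] [MeasurableSpace X]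
    (μ : Measure X) [μ.IsOpenPosMeasure] {f : X → ENNReal} (hf : AEMeasurable f μ)
    (hf_ne_zero : ∀ᵐ x ∂μ, f x ≠ 0) : (μ.withDensity f).IsOpenPosMeasure :=
  (withDensity_absolutelyContinuous' hf hf_ne_zero).isOpenPosMeasure

lemma strictMono_cdf (μ : Measure ℝ) [IsProbabilityMeasure μ] [μ.IsOpenPosMeasure] :
    StrictMono (cdf μ) := by
  intro a b hab
  have hIoc : 0 < μ (Ioc a b) :=
    (isOpen_Ioo.measure_pos μ (nonempty_Ioo.mpr hab)).trans_le (measure_mono Ioo_subset_Ioc_self)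
  rw [← measure_cdf μ, StieltjesFunction.measure_Ioc, ENNReal.ofReal_pos] at hIoc
  linarith

lemma quantileFun_cdf {μ : Measure ℝ} (hμ : StrictMono (cdf μ)) (t : ℝ) :
    quantileFun μ (cdf μ t) = t := by
  have hsuperlevel : {y : ℝ | cdf μ t ≤ cdf μ y} = Ici t := by
    ext y
    exact hμ.le_iff_le
  rw [quantileFun, hsuperlevel, csInf_Ici]

lemma cdf_map_of_strictMono (α : Measure ℝ) [IsProbabilityMeasure α] {h : ℝ → ℝ}
    (hh : StrictMono h) (x : ℝ) : cdf (α.map h) (h x) = cdf α x := by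
  have hm : Measurable h := hh.monotone.measurable
  have := Measure.isProbabilityMeasure_map (μ := α) hm.aemeasurable
  have hpre : h ⁻¹' Iic (h x) = Iic x := by
    ext y
    simp [hh.le_iff_le]
  rw [cdf_eq_real, cdf_eq_real, map_measureReal_apply hm measurableSet_Iic, hpre]

lemma quantileFun_map_cdf (ν : Measure ℝ) [IsProbabilityMeasure ν] {h : ℝ → ℝ}
    (hh : StrictMono h) (hcdf : StrictMono (cdf (ν.map h))) (x : ℝ) :
    quantileFun (ν.map h) (cdf ν x) = h x := by
  rw [← cdf_map_of_strictMono ν hh, quantileFun_cdf hcdf]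

lemma cdf_conv (α ν : Measure ℝ) [IsProbabilityMeasure α] [IsProbabilityMeasure ν] (y : ℝ) :
    cdf (α ∗ ν) y = ∫ z, cdf α (y - z) ∂ν := by
  have hIic : MeasurableSet (Iic y) := measurableSet_Iic
  have hmass : (α ∗ ν) (Iic y) = ∫⁻ z, α (Iic (y - z)) ∂ν := by
    rw [Measure.conv_comm, ← lintegral_indicator_one hIic,
      Measure.lintegral_conv (measurable_one.indicator hIic)]
    refine lintegral_congr fun z => ?_
    rw [← lintegral_indicator_one measurableSet_Iic]
    congr 1
    ext x
    simp only [indicator, mem_Iic, Pi.one_apply, le_sub_iff_add_le']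
  rw [cdf_eq_real, measureReal_def, hmass, integral_eq_lintegral_of_nonneg_ae
    (ae_of_all _ fun z => cdf_nonneg α _)
    ((monotone_cdf α).measurable.comp (by fun_prop)).aestronglyMeasurable]
  simp only [ofReal_cdf]

lemma gaussConv_eq_integral_gaussianReal (f : ℝ → ℝ) (x : ℝ) :
    gaussConv f x = ∫ z, f (x - z) ∂gaussianReal 0 1 := by
  simp only [gaussConv, integral_gaussianReal_eq_integral_smul one_ne_zero, smul_eq_mul, mul_comm]

lemma strictMono_gaussConv {F : ℝ → ℝ} (hF : StrictMono F)
    (hint : ∀ x, Integrable (fun z => F (x - z) * gaussianPDFReal 0 1 z)) :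
    StrictMono (gaussConv F) := by
  intro a b hab
  have hdiff : 0 < ∫ z, (F (b - z) * gaussianPDFReal 0 1 z - F (a - z) * gaussianPDFReal 0 1 z) :=
    integral_pos_of_forall_pos (fun z => by
      rw [← sub_mul]
      exact mul_pos (sub_pos.mpr (hF (by linarith))) (gaussianPDFReal_pos 0 1 z one_ne_zero))
      ((hint b).sub (hint a))
  rw [integral_sub (hint b) (hint a)] at hdiff
  exact sub_pos.mp hdiff

theorem mpms_fixed_point_general (μ0 μ1 α0 : Measure ℝ)
    [IsProbabilityMeasure μ1] [IsProbabilityMeasure α0]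
    (f1 : ℝ → ℝ) (hf1 : ∀ x, 0 < f1 x)
    (hf1m : Measurable f1)
    (hμ1 : μ1 = volume.withDensity (fun x => ENNReal.ofReal (f1 x)))
    (F1 : ℝ → ℝ) (hF1 : StrictMono F1)
    (hint : ∀ x : ℝ, Integrable (fun z => F1 (x - z) * gaussianPDFReal 0 1 z))
    (hpush0 : μ0 = Measure.map (gaussConv F1) α0)
    (hpush1 : μ1 = Measure.map F1 (Measure.conv α0 (gaussianReal 0 1))) :
    ∀ x : ℝ, (cdf α0 x : ℝ)
      = cdf μ0 (gaussConv (fun y => quantileFun μ1 (gaussConv (fun w => (cdf α0 w : ℝ)) y)) x) := by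
  intro x
  have hpos1 : μ1.IsOpenPosMeasure := hμ1 ▸ isOpenPosMeasure_withDensity volume
    hf1m.ennreal_ofReal.aemeasurable (ae_of_all _ fun x => (ENNReal.ofReal_pos.mpr (hf1 x)).ne')
  have hcdf1 : StrictMono (cdf μ1) := strictMono_cdf μ1
  have hinner : (fun y => quantileFun μ1 (gaussConv (fun w => (cdf α0 w : ℝ)) y)) = F1 := by
    funext y
    rw [gaussConv_eq_integral_gaussianReal, ← cdf_conv, hpush1]
    exact quantileFun_map_cdf _ hF1 (hpush1 ▸ hcdf1) y
  rw [hinner, hpush0, cdf_map_of_strictMono α0 (strictMono_gaussConv hF1 hint)]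

/-- If `μ_0 = (R_1 * F_1)_# α_0` and `μ_1 = (F_1)_# (α_0 * R_1)` with `μ_0, μ_1` having
positive densities and `F_1` increasing, then the CDF of `α_0` satisfies the fixed-point
equation `G_{α_0} = G_{μ_0} ∘ (R_1 * (G_{μ_1}⁻¹ ∘ (R_1 * G_{α_0})))`. -/
theorem mpms_fixed_point (μ0 μ1 α0 : Measure ℝ)
    [IsProbabilityMeasure μ0] [IsProbabilityMeasure μ1] [IsProbabilityMeasure α0]
    (f0 f1 : ℝ → ℝ) (hf0 : ∀ x, 0 < f0 x) (hf1 : ∀ x, 0 < f1 x)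
    (hf0m : Measurable f0) (hf1m : Measurable f1)
    (hμ0 : μ0 = volume.withDensity (fun x => ENNReal.ofReal (f0 x)))
    (hμ1 : μ1 = volume.withDensity (fun x => ENNReal.ofReal (f1 x)))
    (F1 : ℝ → ℝ) (hF1 : StrictMono F1)
    (hint : ∀ x : ℝ, Integrable (fun z => F1 (x - z) * gaussianPDFReal 0 1 z))
    (hpush0 : μ0 = Measure.map (gaussConv F1) α0)
    (hpush1 : μ1 = Measure.map F1 (Measure.conv α0 (gaussianReal 0 1)))
    (hint' : ∀ x : ℝ, Integrable (fun z =>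
        quantileFun μ1 (gaussConv (fun y => (cdf α0 y : ℝ)) (x - z)) * gaussianPDFReal 0 1 z)) :
    ∀ x : ℝ, (cdf α0 x : ℝ)
      = cdf μ0 (gaussConv (fun y => quantileFun μ1 (gaussConv (fun w => (cdf α0 w : ℝ)) y)) x) :=
  mpms_fixed_point_general μ0 μ1 α0 f1 hf1 hf1m hμ1 F1 hF1 hint hpush0 hpush1
end

section
/- Let μ be a probability measure on ℝ and φ, φ̃ : ℝ → ℝ be two increasing maps. Set α = φ_# μ and α̃ = φ̃_# μ. Then W^∞(α, α̃) ≤ ‖φ − φ̃‖_{L^∞(supp μ)}. Moreover, if φ = G_{α}^{-1}∘G_μ and φ̃ = G_{α̃}^{-1}∘G_μ with μ atomless and α, α̃ having positive densities, then equality W^∞(α, α̃) = ‖φ − φ̃‖_{L^∞(supp μ)} holds. -/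
open MeasureTheory ProbabilityTheory
open scoped ENNReal

/-- The infinity-Wasserstein distance: infimum over couplings of the essential supremum of
the distance between the coordinates. -/
noncomputable def Winf (α β : Measure ℝ) : ℝ≥0∞ :=
  ⨅ π ∈ {π : Measure (ℝ × ℝ) |
      Measure.map Prod.fst π = α ∧ Measure.map Prod.snd π = β},
    essSup (fun p : ℝ × ℝ => edist p.1 p.2) π

/-!
The monotone coupling `(φ, φ̃)_# μ` has marginals `α, α̃` and cost `‖φ - φ̃‖_{L^∞(μ)}`, which gives
the inequality. For the equality, `G_μ` is continuous when `μ` is atomless, so `G_μ(x) ∈ (0, 1)`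
for `μ`-a.e. `x` and `(G_μ)_# μ` is uniform; hence `G_α^{-1} ∘ G_μ` pushes `μ` onto `α`. Conversely,
a coupling of `α, α̃` supported in `{|x - y| ≤ w}` gives `G_α(t) ≤ G_α̃(t + w)` and
`G_α̃(t) ≤ G_α(t + w)`, and the Galois connection `G^{-1}(u) ≤ y ↔ u ≤ G(y)` for `u ∈ (0, 1)` turns
this into `|G_α^{-1}(u) - G_α̃^{-1}(u)| ≤ w`.
-/

open Set Filter Topology

section Quantile

variable (ν : Measure ℝ)

lemma nonempty_setOf_le_cdf {u : ℝ} (hu : u < 1) : {y | u ≤ cdf ν y}.Nonempty :=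
  ((tendsto_cdf_atTop ν).eventually (eventually_ge_nhds hu)).exists

lemma bddBelow_setOf_le_cdf {u : ℝ} (hu : 0 < u) : BddBelow {y | u ≤ cdf ν y} := by
  obtain ⟨c, hc⟩ := eventually_atBot.1 ((tendsto_cdf_atBot ν).eventually (eventually_lt_nhds hu))
  exact ⟨c, fun y hy => not_lt.1 fun hyc => (hc y hyc.le).not_ge hy⟩

lemma bddAbove_setOf_cdf_le {u : ℝ} (hu : u < 1) : BddAbove {y | cdf ν y ≤ u} := by
  obtain ⟨c, hc⟩ := eventually_atTop.1 ((tendsto_cdf_atTop ν).eventually (eventually_gt_nhds hu))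
  exact ⟨c, fun y hy => not_lt.1 fun hcy => (hc y hcy.le).not_ge hy⟩

lemma quantileFun_le_of_le_cdf {u : ℝ} (hu : 0 < u) {y : ℝ} (hy : u ≤ cdf ν y) :
    quantileFun ν u ≤ y :=
  csInf_le (bddBelow_setOf_le_cdf ν hu) hy

lemma le_cdf_quantileFun {u : ℝ} (hu1 : u < 1) :
    u ≤ cdf ν (quantileFun ν u) := by
  have hgt : ∀ y ∈ Ioi (quantileFun ν u), u ≤ cdf ν y := fun y hy => by
    obtain ⟨z, hz, hzy⟩ := exists_lt_of_csInf_lt (nonempty_setOf_le_cdf ν hu1) hy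
    exact hz.trans (monotone_cdf ν hzy.le)
  exact ge_of_tendsto (((cdf ν).right_continuous _).tendsto.mono_left
    (nhdsWithin_mono _ Ioi_subset_Ici_self)) (eventually_nhdsWithin_of_forall hgt)

lemma quantileFun_le_iff {u : ℝ} (hu0 : 0 < u) (hu1 : u < 1) {y : ℝ} :
    quantileFun ν u ≤ y ↔ u ≤ cdf ν y :=
  ⟨fun h => (le_cdf_quantileFun ν hu1).trans (monotone_cdf ν h),
    quantileFun_le_of_le_cdf ν hu0⟩

end Quantile

section Atomless

variable (ν : Measure ℝ) [IsProbabilityMeasure ν] [NullSingletonClass ν]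

lemma continuous_cdf : Continuous (cdf ν) := by
  refine continuous_iff_continuousAt.2 fun x => ?_
  rw [(monotone_cdf ν).continuousAt_iff_leftLim_eq_rightLim, (cdf ν).rightLim_eq]
  have h := (cdf ν).measure_singleton x
  rw [measure_cdf, measure_singleton, eq_comm, ENNReal.ofReal_eq_zero, sub_nonpos] at h
  exact le_antisymm ((monotone_cdf ν).leftLim_le le_rfl) h

lemma measure_cdf_le {u : ℝ} (hu0 : 0 ≤ u) (hu1 : u ≤ 1) :
    ν {x | cdf ν x ≤ u} = ENNReal.ofReal u := by
  rcases hu1.eq_or_lt with rfl | hu1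
  · simp [cdf_le_one]
  set S := {x | cdf ν x ≤ u}
  rcases S.eq_empty_or_nonempty with hS | hS
  · have hu : u ≤ 0 := ge_of_tendsto' (tendsto_cdf_atBot ν) fun x =>
      (not_le.1 (eq_empty_iff_forall_notMem.1 hS x)).le
    rw [hS, measure_empty, ENNReal.ofReal_of_nonpos hu]
  have hbdd := bddAbove_setOf_cdf_le ν hu1
  have hs : cdf ν (sSup S) ≤ u :=
    (isClosed_le (continuous_cdf ν) continuous_const).csSup_mem hS hbdd
  -- `cdf` is continuous, so it stays below `u` a little to the right of `sSup S`
  have hcdf : cdf ν (sSup S) = u := by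
    refine hs.antisymm (not_lt.1 fun hlt => ?_)
    obtain ⟨y, hyu, hsy⟩ := ((((continuous_cdf ν).continuousAt.eventually_lt_const hlt).filter_mono
      nhdsWithin_le_nhds).and (self_mem_nhdsWithin (s := Ioi (sSup S)))).exists
    exact (le_csSup hbdd hyu.le).not_gt hsy
  have hS_eq : S = Iic (sSup S) :=
    Subset.antisymm (fun y hy => le_csSup hbdd hy) fun y hy => (monotone_cdf ν hy).trans hs
  rw [hS_eq, ← ofReal_cdf, hcdf]

lemma measure_one_le_cdf : ν {x | 1 ≤ cdf ν x} = 0 := by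
  set T := {x | 1 ≤ cdf ν x}
  rcases T.eq_empty_or_nonempty with hT | hT
  · rw [hT, measure_empty]
  have hbdd := bddBelow_setOf_le_cdf ν one_pos
  have ht : 1 ≤ cdf ν (sInf T) :=
    (isClosed_le continuous_const (continuous_cdf ν)).csInf_mem hT hbdd
  have hIoi : ν (Ioi (sInf T)) = 0 := by
    rw [← compl_Iic, prob_compl_eq_one_sub measurableSet_Iic, ← ofReal_cdf,
      (cdf_le_one ν _).antisymm ht, ENNReal.ofReal_one, tsub_self]
  exact measure_mono_null (t := Ici (sInf T)) (fun x hx => csInf_le hbdd hx)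
    ((measure_congr Ioi_ae_eq_Ici).symm.trans hIoi)

lemma ae_cdf_mem_Ioo : ∀ᵐ x ∂ν, cdf ν x ∈ Ioo 0 1 := by
  have h0 : ∀ᵐ x ∂ν, 0 < cdf ν x := by
    simpa only [ae_iff, not_lt, ENNReal.ofReal_zero] using measure_cdf_le ν le_rfl zero_le_one
  have h1 : ∀ᵐ x ∂ν, cdf ν x < 1 := by
    simpa only [ae_iff, not_lt] using measure_one_le_cdf ν
  filter_upwards [h0, h1] with x using And.intro

end Atomless

lemma map_quantileFun_comp_cdf {μ α : Measure ℝ} [IsProbabilityMeasure μ] [NullSingletonClass μ]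
    [IsProbabilityMeasure α] (hm : Measurable fun x => quantileFun α (cdf μ x)) :
    μ.map (fun x => quantileFun α (cdf μ x)) = α := by
  have := Measure.isProbabilityMeasure_map (μ := μ) hm.aemeasurable
  refine Measure.ext_of_Iic _ _ fun t => ?_
  rw [Measure.map_apply hm measurableSet_Iic, ← ofReal_cdf α t,
    ← measure_cdf_le μ (cdf_nonneg α t) (cdf_le_one α t)]
  refine measure_congr (eventuallyEq_set.2 ?_)
  filter_upwards [ae_cdf_mem_Ioo μ] with x hx using quantileFun_le_iff α hx.1 hx.2

lemma cdf_le_cdf_add_of_ae_le {X : Type*} [MeasurableSpace X] {π : Measure X} {f g : X → ℝ}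
    (hf : Measurable f) (hg : Measurable g) {β γ : Measure ℝ} [IsProbabilityMeasure β]
    [IsProbabilityMeasure γ] (hβ : π.map f = β) (hγ : π.map g = γ) {w : ℝ}
    (hgf : ∀ᵐ x ∂π, g x ≤ f x + w) (t : ℝ) :
    cdf β t ≤ cdf γ (t + w) := by
  have hle : π (f ⁻¹' Iic t) ≤ π (g ⁻¹' Iic (t + w)) := measure_mono_ae <| by
    filter_upwards [hgf] with x hx (hxt : f x ≤ t)
    exact (show g x ≤ t + w by linarith)
  rw [← Measure.map_apply hf measurableSet_Iic, ← Measure.map_apply hg measurableSet_Iic, hβ, hγ,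
    ← ofReal_cdf, ← ofReal_cdf] at hle
  exact (ENNReal.ofReal_le_ofReal_iff (cdf_nonneg _ _)).1 hle

lemma quantileFun_le_add_of_cdf_le {β γ : Measure ℝ} {w : ℝ}
    (h : ∀ t, cdf β t ≤ cdf γ (t + w)) {u : ℝ} (hu0 : 0 < u) (hu1 : u < 1) :
    quantileFun γ u ≤ quantileFun β u + w :=
  quantileFun_le_of_le_cdf γ hu0 ((le_cdf_quantileFun β hu1).trans (h _))

lemma essSup_edist_quantileFun_le_of_coupling (μ : Measure ℝ) [IsProbabilityMeasure μ]
    [NullSingletonClass μ] {α αt : Measure ℝ} [IsProbabilityMeasure α] [IsProbabilityMeasure αt]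
    {π : Measure (ℝ × ℝ)} (hfst : π.map Prod.fst = α) (hsnd : π.map Prod.snd = αt) :
    essSup (fun x => edist (quantileFun α (cdf μ x)) (quantileFun αt (cdf μ x))) μ
      ≤ essSup (fun p : ℝ × ℝ => edist p.1 p.2) π := by
  set W := essSup (fun p : ℝ × ℝ => edist p.1 p.2) π
  rcases eq_or_ne W ⊤ with hW | hW
  · exact hW ▸ le_top
  have hW_eq : W = ENNReal.ofReal W.toReal := (ENNReal.ofReal_toReal hW).symm
  have hle : ∀ᵐ p ∂π, edist p.1 p.2 ≤ W := ENNReal.ae_le_essSup _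
  have hdist : ∀ᵐ p ∂π, |p.1 - p.2| ≤ W.toReal := by
    filter_upwards [hle] with p hp
    rwa [hW_eq, edist_le_ofReal ENNReal.toReal_nonneg, Real.dist_eq] at hp
  have hα : ∀ t, cdf α t ≤ cdf αt (t + W.toReal) :=
    cdf_le_cdf_add_of_ae_le measurable_fst measurable_snd hfst hsnd <| by
      filter_upwards [hdist] with p hp using by linarith [neg_abs_le (p.1 - p.2)]
  have hαt : ∀ t, cdf αt t ≤ cdf α (t + W.toReal) :=
    cdf_le_cdf_add_of_ae_le measurable_snd measurable_fst hsnd hfst <| by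
      filter_upwards [hdist] with p hp using by linarith [le_abs_self (p.1 - p.2)]
  refine essSup_le_of_ae_le W ?_
  filter_upwards [ae_cdf_mem_Ioo μ] with x ⟨hx0, hx1⟩
  rw [hW_eq, edist_le_ofReal ENNReal.toReal_nonneg, Real.dist_eq, abs_sub_le_iff]
  exact ⟨by linarith [quantileFun_le_add_of_cdf_le hαt hx0 hx1],
    by linarith [quantileFun_le_add_of_cdf_le hα hx0 hx1]⟩

lemma Winf_map_le_essSup (μ : Measure ℝ) {φ φt : ℝ → ℝ} (hφ : Measurable φ)
    (hφt : Measurable φt) :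
    Winf (μ.map φ) (μ.map φt) ≤ essSup (fun x => edist (φ x) (φt x)) μ := by
  have hm : Measurable fun x => (φ x, φt x) := hφ.prodMk hφt
  refine (iInf₂_le (μ.map fun x => (φ x, φt x)) ⟨?_, ?_⟩).trans_eq ?_
  · exact essSup_map_measure measurable_edist.aemeasurable hm.aemeasurable
  · exact Measure.map_map measurable_fst hm
  · exact Measure.map_map measurable_snd hm

/-- For increasing maps `φ, φ̃` and `α = φ_#μ`, `α̃ = φ̃_#μ`, one has
`W^∞(α, α̃) ≤ ‖φ − φ̃‖_{L^∞(supp μ)}` (the essential supremum w.r.t. `μ`); moreover, if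
`φ, φ̃` are the monotone (quantile) transport maps from an atomless `μ` onto measures with
positive densities, then equality holds. -/
theorem winf_pushforward_bound_and_monotone_equality (μ : Measure ℝ)
    [IsProbabilityMeasure μ] (φ φt : ℝ → ℝ)
    (hφ : Monotone φ) (hφt : Monotone φt) :
    Winf (Measure.map φ μ) (Measure.map φt μ)
      ≤ essSup (fun x => edist (φ x) (φt x)) μ ∧
    (∀ (α αt : Measure ℝ), IsProbabilityMeasure α → IsProbabilityMeasure αt →
      NoAtoms μ →
      (∃ f : ℝ → ℝ, (∀ x, 0 < f x) ∧ Measurable f ∧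
        α = volume.withDensity (fun x => ENNReal.ofReal (f x))) →
      (∃ g : ℝ → ℝ, (∀ x, 0 < g x) ∧ Measurable g ∧
        αt = volume.withDensity (fun x => ENNReal.ofReal (g x))) →
      φ = (fun x => quantileFun α (cdf μ x)) →
      φt = (fun x => quantileFun αt (cdf μ x)) →
      Winf α αt = essSup (fun x => edist (φ x) (φt x)) μ) := by
  refine ⟨Winf_map_le_essSup μ hφ.measurable hφt.measurable, ?_⟩
  rintro α αt hα hαt hμ - - rfl rfl
  have : NullSingletonClass μ := hμ
  refine le_antisymm ?_ (le_iInf₂ fun π hπ => essSup_edist_quantileFun_le_of_coupling μ hπ.1 hπ.2)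
  have hle := Winf_map_le_essSup μ hφ.measurable hφt.measurable
  rwa [map_quantileFun_comp_cdf hφ.measurable, map_quantileFun_comp_cdf hφt.measurable] at hle
end

section
/- Let u : [0,T]×ℝ → ℝ be a bounded C^{1,2} solution of the backward linear parabolic equation ∂_t u + a(t,x) ∂_{xx}u + b(t,x) ∂_x u = 0 on [0,T]×ℝ, where a ≥ λ > 0 and a, b are bounded and continuous. Then ‖u(0,·)‖_{L^∞(ℝ)} ≤ ‖u(T,·)‖_{L^∞(ℝ)}. -/
open Set Filter Real Topology

/-! Subtracting the barrier `δ e^{-Kt} cosh x`, with `K > sup |a| + sup |b|`, from `u` gives a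
function `v` with `v_t + a v_xx + b v_x > 0` that tends to `-∞` as `|x| → ∞` uniformly in `t`.
So `v` attains its maximum over the strip, and it cannot do so at a time `t < T`, where
`v_t ≤ 0`, `v_x = 0` and `v_xx ≤ 0`. Hence `u(0,x) - δ cosh x ≤ sup u(T,·)`; let `δ → 0` and
apply this to `u` and `-u`. -/

theorem HasDerivAt.nonpos_of_isMaxOn_Icc {f : ℝ → ℝ} {d a b : ℝ} (hf : HasDerivAt f d a)
    (hab : a < b) (hmax : IsMaxOn f (Icc a b) a) : d ≤ 0 := by
  have hseg : segment ℝ a (a + (b - a)) ⊆ Icc a b := by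
    rw [add_sub_cancel, segment_eq_Icc hab.le]
  have h := hmax.localize.hasFDerivWithinAt_nonpos hf.hasFDerivAt.hasFDerivWithinAt
    (mem_posTangentConeAt_of_segment_subset hseg)
  simp only [ContinuousLinearMap.toSpanSingleton_apply, smul_eq_mul] at h
  exact nonpos_of_mul_nonpos_right h (sub_pos.2 hab)

/-- If `f'' > 0`, the second derivative test makes `x` a local minimum as well, so `f` is locally
constant and `f'' = 0`. -/
theorem IsLocalMax.nonpos_of_hasDerivAt_deriv {f f' : ℝ → ℝ} {x f'' : ℝ} (h : IsLocalMax f x)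
    (hf : ∀ y, HasDerivAt f (f' y) y) (hf' : HasDerivAt f' f'' x) : f'' ≤ 0 := by
  by_contra! hpos
  have hderiv : deriv f = f' := funext fun y => (hf y).deriv
  have hmin : IsLocalMin f x := isLocalMin_of_deriv_deriv_pos (by rwa [hderiv, hf'.deriv])
    (by rw [hderiv]; exact h.hasDerivAt_eq_zero (hf x)) (hf x).continuousAt
  have hconst : f =ᶠ[𝓝 x] fun _ => f x := (h.and hmin).mono fun y hy => le_antisymm hy.1 hy.2
  have hzero : deriv (deriv f) x = 0 := by
    rw [hconst.deriv.deriv_eq]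
    simp
  rw [hderiv, hf'.deriv] at hzero
  exact hpos.ne' hzero

theorem Real.abs_sinh_le_cosh (x : ℝ) : |sinh x| ≤ cosh x := by
  rw [abs_sinh, ← cosh_abs]
  exact (sinh_lt_cosh _).le

theorem Real.abs_le_cosh (x : ℝ) : |x| ≤ cosh x := by
  rw [← cosh_abs]
  exact (self_le_sinh_iff.2 (abs_nonneg x)).trans (sinh_lt_cosh _).le

theorem cosh_barrier_pos {K a b Ca Cb : ℝ} (ha : |a| ≤ Ca) (hb : |b| ≤ Cb) (hK : Ca + Cb < K)
    (x : ℝ) : 0 < K * cosh x - a * cosh x - b * sinh x := by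
  have hcosh : 0 < cosh x := cosh_pos x
  have hbsinh : b * sinh x ≤ Cb * cosh x := calc
    b * sinh x ≤ |b| * |sinh x| := by rw [← abs_mul]; exact le_abs_self _
    _ ≤ Cb * cosh x := mul_le_mul hb (abs_sinh_le_cosh x) (abs_nonneg _) ((abs_nonneg b).trans hb)
  nlinarith [le_of_abs_le ha]

section Strip

variable {T : ℝ} {v : ℝ → ℝ → ℝ}

theorem exists_forall_le_of_far_le (hv : Continuous fun p : ℝ × ℝ => v p.1 p.2) (hT : 0 ≤ T)
    {R : ℝ} (hR : 0 ≤ R) (hfar : ∀ t ∈ Icc 0 T, ∀ x, R < |x| → v t x ≤ v t 0) :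
    ∃ t₀ ∈ Icc 0 T, ∃ x₀, ∀ t ∈ Icc 0 T, ∀ x, v t x ≤ v t₀ x₀ := by
  have hbox_compact : IsCompact (Icc 0 T ×ˢ Icc (-R) R) := isCompact_Icc.prod isCompact_Icc
  obtain ⟨⟨t₀, x₀⟩, ⟨ht₀, -⟩, hmax⟩ := hbox_compact.exists_isMaxOn
    ⟨(0, 0), left_mem_Icc.2 hT, by simpa using hR⟩ hv.continuousOn
  have hbox : ∀ t ∈ Icc 0 T, ∀ x, |x| ≤ R → v t x ≤ v t₀ x₀ := fun t ht x hx =>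
    hmax (mk_mem_prod ht (abs_le.1 hx))
  refine ⟨t₀, ht₀, x₀, fun t ht x => ?_⟩
  rcases le_or_gt |x| R with hx | hx
  · exact hbox t ht x hx
  · exact (hfar t ht x hx).trans (hbox t ht 0 (by simpa using hR))

theorem eq_of_forall_le_of_parabolic_pos {t₀ x₀ vt vxx a b : ℝ} {vx : ℝ → ℝ} (ht₀ : t₀ ∈ Icc 0 T)
    (hmax : ∀ t ∈ Icc 0 T, ∀ x, v t x ≤ v t₀ x₀)
    (hvt : HasDerivAt (v · x₀) vt t₀) (hvx : ∀ x, HasDerivAt (v t₀ ·) (vx x) x)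
    (hvxx : HasDerivAt vx vxx x₀) (ha : 0 ≤ a) (hpos : 0 < vt + a * vxx + b * vx x₀) :
    t₀ = T := by
  by_contra hne
  have hvt_nonpos : vt ≤ 0 := hvt.nonpos_of_isMaxOn_Icc (ht₀.2.lt_of_ne hne)
    fun t ht => hmax t ⟨ht₀.1.trans ht.1, ht.2⟩ x₀
  have hlocal : IsLocalMax (v t₀ ·) x₀ := Eventually.of_forall (hmax t₀ ht₀)
  have hvx_zero : vx x₀ = 0 := hlocal.hasDerivAt_eq_zero (hvx x₀)
  have hdiffusion : a * vxx ≤ 0 :=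
    mul_nonpos_of_nonneg_of_nonpos ha (hlocal.nonpos_of_hasDerivAt_deriv hvx hvxx)
  rw [hvx_zero, mul_zero] at hpos
  linarith

end Strip

section Parabolic

variable {T : ℝ} {u ut ux uxx a b : ℝ → ℝ → ℝ}

theorem exists_far_sub_barrier_le {C K δ : ℝ} (hC : ∀ t ∈ Icc 0 T, ∀ x, |u t x| ≤ C)
    (hK : 0 ≤ K) (hδ : 0 < δ) (hC0 : 0 ≤ C) :
    ∃ R, 0 ≤ R ∧ ∀ t ∈ Icc 0 T, ∀ x, R < |x| →
      u t x - δ * (exp (-K * t) * cosh x) ≤ u t 0 - δ * (exp (-K * t) * cosh 0) := by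
  have hscale : 0 < δ * exp (-K * T) := mul_pos hδ (exp_pos _)
  refine ⟨(2 * C + δ) / (δ * exp (-K * T)), by positivity, fun t ht x hx => ?_⟩
  have hexpT : exp (-K * T) ≤ exp (-K * t) := exp_le_exp.2 (by nlinarith [ht.2])
  have hbarrier : 2 * C + δ ≤ δ * (exp (-K * t) * cosh x) := calc
    2 * C + δ = δ * exp (-K * T) * ((2 * C + δ) / (δ * exp (-K * T))) := by field_simp
    _ ≤ δ * exp (-K * t) * cosh x := by
      gcongr
      exact hx.le.trans (abs_le_cosh x)
    _ = δ * (exp (-K * t) * cosh x) := by ring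
  have hexp : exp (-K * t) ≤ 1 := exp_le_one_iff.2 (by nlinarith [ht.1])
  have hu : u t x ≤ C := (le_abs_self _).trans (hC t ht x)
  have hu0 : -C ≤ u t 0 := neg_le_of_abs_le (hC t ht 0)
  rw [cosh_zero, mul_one]
  nlinarith

theorem le_add_mul_cosh_of_forall_terminal_le (hT : 0 ≤ T)
    (hu_cont : Continuous fun p : ℝ × ℝ => u p.1 p.2) (ha : ∀ t ∈ Icc 0 T, ∀ x, 0 ≤ a t x)
    {Ca Cb C : ℝ} (hCa : ∀ t ∈ Icc 0 T, ∀ x, |a t x| ≤ Ca)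
    (hCb : ∀ t ∈ Icc 0 T, ∀ x, |b t x| ≤ Cb) (hC : ∀ t ∈ Icc 0 T, ∀ x, |u t x| ≤ C)
    (hut : ∀ t ∈ Icc 0 T, ∀ x, HasDerivAt (fun s => u s x) (ut t x) t)
    (hux : ∀ t ∈ Icc 0 T, ∀ x, HasDerivAt (fun y => u t y) (ux t x) x)
    (huxx : ∀ t ∈ Icc 0 T, ∀ x, HasDerivAt (fun y => ux t y) (uxx t x) x)
    (hpde : ∀ t ∈ Icc 0 T, ∀ x, ut t x + a t x * uxx t x + b t x * ux t x = 0)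
    {M : ℝ} (hM : ∀ x, u T x ≤ M) {δ : ℝ} (hδ : 0 < δ) (x₀ : ℝ) :
    u 0 x₀ ≤ M + δ * cosh x₀ := by
  have h0 : (0 : ℝ) ∈ Icc 0 T := left_mem_Icc.2 hT
  have hCa0 : 0 ≤ Ca := (abs_nonneg _).trans (hCa 0 h0 0)
  have hCb0 : 0 ≤ Cb := (abs_nonneg _).trans (hCb 0 h0 0)
  set K := Ca + Cb + 1
  set v : ℝ → ℝ → ℝ := fun t x => u t x - δ * (exp (-K * t) * cosh x)
  obtain ⟨R, hR, hfar⟩ := exists_far_sub_barrier_le (K := K) hC (by positivity) hδ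
    ((abs_nonneg _).trans (hC 0 h0 0))
  obtain ⟨t₁, ht₁, x₁, hmax⟩ := exists_forall_le_of_far_le (v := v) (by fun_prop) hT hR hfar
  have hvt : HasDerivAt (v · x₁) (ut t₁ x₁ + δ * (K * (exp (-K * t₁) * cosh x₁))) t₁ := by
    have := (hut t₁ ht₁ x₁).sub
      ((((hasDerivAt_id' t₁).const_mul (-K)).exp.mul_const (cosh x₁)).const_mul δ)
    exact this.congr_deriv (by ring)
  have hvx : ∀ x, HasDerivAt (v t₁ ·) (ux t₁ x - δ * (exp (-K * t₁) * sinh x)) x := fun x =>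
    (hux t₁ ht₁ x).sub (((hasDerivAt_cosh x).const_mul _).const_mul δ)
  have hvxx : HasDerivAt (fun x => ux t₁ x - δ * (exp (-K * t₁) * sinh x))
      (uxx t₁ x₁ - δ * (exp (-K * t₁) * cosh x₁)) x₁ :=
    (huxx t₁ ht₁ x₁).sub (((hasDerivAt_sinh x₁).const_mul _).const_mul δ)
  have hsuper := mul_pos (mul_pos hδ (exp_pos (-K * t₁)))
    (cosh_barrier_pos (hCa t₁ ht₁ x₁) (hCb t₁ ht₁ x₁) (by linarith : Ca + Cb < K) x₁)
  have hparabolic : 0 < ut t₁ x₁ + δ * (K * (exp (-K * t₁) * cosh x₁))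
      + a t₁ x₁ * (uxx t₁ x₁ - δ * (exp (-K * t₁) * cosh x₁))
      + b t₁ x₁ * (ux t₁ x₁ - δ * (exp (-K * t₁) * sinh x₁)) := by
    linear_combination hsuper - hpde t₁ ht₁ x₁
  have hterminal : t₁ = T :=
    eq_of_forall_le_of_parabolic_pos ht₁ hmax hvt hvx hvxx (ha t₁ ht₁ x₁) hparabolic
  subst hterminal
  have hbarrier_pos : 0 < δ * (exp (-K * t₁) * cosh x₁) := by positivity
  calc u 0 x₀ = v 0 x₀ + δ * cosh x₀ := by simp [v]
    _ ≤ v t₁ x₁ + δ * cosh x₀ := by gcongr; exact hmax 0 h0 x₀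
    _ ≤ M + δ * cosh x₀ := by linarith [hM x₁]

theorem le_of_forall_terminal_le (hT : 0 ≤ T)
    (hu_cont : Continuous fun p : ℝ × ℝ => u p.1 p.2) (ha : ∀ t ∈ Icc 0 T, ∀ x, 0 ≤ a t x)
    {Ca Cb C : ℝ} (hCa : ∀ t ∈ Icc 0 T, ∀ x, |a t x| ≤ Ca)
    (hCb : ∀ t ∈ Icc 0 T, ∀ x, |b t x| ≤ Cb) (hC : ∀ t ∈ Icc 0 T, ∀ x, |u t x| ≤ C)
    (hut : ∀ t ∈ Icc 0 T, ∀ x, HasDerivAt (fun s => u s x) (ut t x) t)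
    (hux : ∀ t ∈ Icc 0 T, ∀ x, HasDerivAt (fun y => u t y) (ux t x) x)
    (huxx : ∀ t ∈ Icc 0 T, ∀ x, HasDerivAt (fun y => ux t y) (uxx t x) x)
    (hpde : ∀ t ∈ Icc 0 T, ∀ x, ut t x + a t x * uxx t x + b t x * ux t x = 0)
    {M : ℝ} (hM : ∀ x, u T x ≤ M) (x₀ : ℝ) :
    u 0 x₀ ≤ M := by
  refine le_of_forall_pos_le_add fun ε hε => ?_
  have hδ : 0 < ε / cosh x₀ := div_pos hε (cosh_pos x₀)
  simpa [div_mul_cancel₀ ε (cosh_pos x₀).ne'] using le_add_mul_cosh_of_forall_terminal_le hT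
    hu_cont ha hCa hCb hC hut hux huxx hpde hM hδ x₀

end Parabolic

theorem backward_parabolic_maximum_principle_general (T lam : ℝ) (hT : 0 < T) (hlam : 0 < lam)
    (u ut ux uxx : ℝ → ℝ → ℝ) (a b : ℝ → ℝ → ℝ)
    (hu_cont : Continuous (fun p : ℝ × ℝ => u p.1 p.2))
    (ha_lb : ∀ t ∈ Set.Icc 0 T, ∀ x : ℝ, lam ≤ a t x)
    (ha_bd : ∃ Ca : ℝ, ∀ t ∈ Set.Icc 0 T, ∀ x : ℝ, |a t x| ≤ Ca)
    (hb_bd : ∃ Cb : ℝ, ∀ t ∈ Set.Icc 0 T, ∀ x : ℝ, |b t x| ≤ Cb)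
    (hu_bd : ∃ C : ℝ, ∀ t ∈ Set.Icc 0 T, ∀ x : ℝ, |u t x| ≤ C)
    (hut : ∀ t ∈ Set.Icc 0 T, ∀ x : ℝ, HasDerivAt (fun s => u s x) (ut t x) t)
    (hux : ∀ t ∈ Set.Icc 0 T, ∀ x : ℝ, HasDerivAt (fun y => u t y) (ux t x) x)
    (huxx : ∀ t ∈ Set.Icc 0 T, ∀ x : ℝ, HasDerivAt (fun y => ux t y) (uxx t x) x)
    (hpde : ∀ t ∈ Set.Icc 0 T, ∀ x : ℝ,
      ut t x + a t x * uxx t x + b t x * ux t x = 0) :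
    (⨆ x : ℝ, |u 0 x|) ≤ ⨆ x : ℝ, |u T x| := by
  obtain ⟨Ca, hCa⟩ := ha_bd
  obtain ⟨Cb, hCb⟩ := hb_bd
  obtain ⟨C, hC⟩ := hu_bd
  have ha : ∀ t ∈ Icc 0 T, ∀ x, 0 ≤ a t x := fun t ht x => hlam.le.trans (ha_lb t ht x)
  have hbdd : BddAbove (range fun x => |u T x|) :=
    ⟨C, forall_mem_range.2 (hC T (right_mem_Icc.2 hT.le))⟩
  have hM : ∀ x, |u T x| ≤ ⨆ x, |u T x| := le_ciSup hbdd
  have hupper := le_of_forall_terminal_le hT.le hu_cont ha hCa hCb hC hut hux huxx hpde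
    fun x => (le_abs_self _).trans (hM x)
  have hlower := le_of_forall_terminal_le (u := fun t x => -u t x) (ut := fun t x => -ut t x)
    (ux := fun t x => -ux t x) (uxx := fun t x => -uxx t x) hT.le hu_cont.neg ha hCa hCb
    (by simpa only [abs_neg] using hC) (fun t ht x => (hut t ht x).neg)
    (fun t ht x => (hux t ht x).neg) (fun t ht x => (huxx t ht x).neg)
    (fun t ht x => by linear_combination -hpde t ht x) fun x => (neg_le_abs _).trans (hM x)
  exact ciSup_le fun x => abs_le.2 ⟨neg_le.1 (hlower x), hupper x⟩

/-- Maximum principle for a backward linear parabolic equation on `[0,T] × ℝ`: for a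
bounded `C^{1,2}` solution of `∂_t u + a ∂_{xx}u + b ∂_x u = 0` with `a ≥ λ > 0` and
`a, b` bounded continuous, `‖u(0,·)‖_∞ ≤ ‖u(T,·)‖_∞`. -/
theorem backward_parabolic_maximum_principle (T lam : ℝ) (hT : 0 < T) (hlam : 0 < lam)
    (u ut ux uxx : ℝ → ℝ → ℝ) (a b : ℝ → ℝ → ℝ)
    (hu_cont : Continuous (fun p : ℝ × ℝ => u p.1 p.2))
    (ha_cont : Continuous (fun p : ℝ × ℝ => a p.1 p.2))
    (hb_cont : Continuous (fun p : ℝ × ℝ => b p.1 p.2))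
    (ha_lb : ∀ t ∈ Set.Icc 0 T, ∀ x : ℝ, lam ≤ a t x)
    (ha_bd : ∃ Ca : ℝ, ∀ t ∈ Set.Icc 0 T, ∀ x : ℝ, |a t x| ≤ Ca)
    (hb_bd : ∃ Cb : ℝ, ∀ t ∈ Set.Icc 0 T, ∀ x : ℝ, |b t x| ≤ Cb)
    (hu_bd : ∃ C : ℝ, ∀ t ∈ Set.Icc 0 T, ∀ x : ℝ, |u t x| ≤ C)
    (hut : ∀ t ∈ Set.Icc 0 T, ∀ x : ℝ, HasDerivAt (fun s => u s x) (ut t x) t)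
    (hux : ∀ t ∈ Set.Icc 0 T, ∀ x : ℝ, HasDerivAt (fun y => u t y) (ux t x) x)
    (huxx : ∀ t ∈ Set.Icc 0 T, ∀ x : ℝ, HasDerivAt (fun y => ux t y) (uxx t x) x)
    (hpde : ∀ t ∈ Set.Icc 0 T, ∀ x : ℝ,
      ut t x + a t x * uxx t x + b t x * ux t x = 0) :
    (⨆ x : ℝ, |u 0 x|) ≤ ⨆ x : ℝ, |u T x| :=
  backward_parabolic_maximum_principle_general T lam hT hlam u ut ux uxx a b hu_cont ha_lb ha_bd
    hb_bd hu_bd hut hux huxx hpde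
end
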